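/- arXiv:1402.5173 — 5 statements merged into one kernel-verified Lean document; each statement's English description precedes it below -/
import Mathlib

section
/- Differentiating the function f_z^{(0)}(t) = t^z log^m t repeatedly k times (k > 0) yields f_z^{(-k)}(t) = t^{z-k} Σ_{i=0}^{min(k,m)} s_{k,k-i}(z) · m(m−1)⋯(m−i+1) · log^{m−i} t, where s_{k,j}(z) = S_{k,j}(z, z−1, …, z−k+1) and S_{k,j} is the j-th elementary symmetric polynomial in k variables. -/
/-- `s_{k,j}(z) = S_{k,j}(z, z-1, …, z-k+1)`: the `j`-th elementary symmetric
polynomial evaluated at `z, z-1, …, z-k+1`. -/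
noncomputable def sElem (k j : ℕ) (z : ℂ) : ℂ :=
  (((Multiset.range k).map (fun i => z - (i : ℂ))).esymm j)

lemma sElem_def (k j : ℕ) (z : ℂ) :
    sElem k j z = ((Multiset.range k).map (fun i : ℕ => z - (i : ℂ))).esymm j := by
  unfold sElem
  congr 1
  simp [bind_pure_comp, Multiset.map_map, Function.comp]

lemma sElem_zero (k : ℕ) (z : ℂ) : sElem k 0 z = 1 := by
  simp [sElem_def, Multiset.esymm]

lemma sElem_eq_zero_of_lt {k r : ℕ} (h : k < r) (z : ℂ) : sElem k r z = 0 := by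
  rw [sElem_def, Multiset.esymm, Multiset.powersetCard_eq_empty]
  · simp
  · simpa using h

lemma esymm_cons (a : ℂ) (s : Multiset ℂ) (n : ℕ) :
    (a ::ₘ s).esymm (n + 1) = s.esymm (n + 1) + a * s.esymm n := by
  rw [Multiset.esymm, Multiset.powersetCard_cons, Multiset.map_add, Multiset.sum_add,
    Multiset.map_map]
  congr 1
  rw [Multiset.esymm, ← Multiset.sum_map_mul_left]
  congr 1
  apply Multiset.map_congr rfl
  intro x _
  simp

lemma sElem_succ (k r : ℕ) (z : ℂ) :
    sElem (k + 1) (r + 1) z = sElem k (r + 1) z + (z - k) * sElem k r z := by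
  simp only [sElem_def, Multiset.range_succ, Multiset.map_cons, esymm_cons]

lemma hasDerivAt_cpow_ofReal (w : ℂ) {t : ℝ} (ht : 0 < t) :
    HasDerivAt (fun t : ℝ => (t : ℂ) ^ w) (w * (t : ℂ) ^ (w - 1)) t := by
  have h0 : (t : ℂ) ∈ Complex.slitPlane := Complex.ofReal_mem_slitPlane.mpr ht
  have := (((hasDerivAt_id ((t : ℝ) : ℂ)).cpow_const (c := w) h0)).comp_ofReal
  simpa using this

lemma hasDerivAt_F (w : ℂ) (n : ℕ) {t : ℝ} (ht : 0 < t) :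
    HasDerivAt (fun t : ℝ => (t : ℂ) ^ w * (Real.log t : ℂ) ^ n)
      ((t : ℂ) ^ (w - 1) *
        (w * (Real.log t : ℂ) ^ n + (n : ℂ) * (Real.log t : ℂ) ^ (n - 1))) t := by
  have htne : (t : ℂ) ≠ 0 := by exact_mod_cast ne_of_gt ht
  have h1 := hasDerivAt_cpow_ofReal w ht
  have h2 := ((Real.hasDerivAt_log ht.ne').pow n).ofReal_comp
  simp only [Pi.pow_apply, Complex.ofReal_pow] at h2
  have h := h1.mul h2
  have hts' : (t : ℂ) ^ (w - 1) = (t : ℂ) ^ w * ((t : ℂ))⁻¹ := by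
    rw [show w - 1 = w + (-1) from by ring, Complex.cpow_add _ _ htne, Complex.cpow_neg_one]
  refine h.congr_deriv ?_
  push_cast
  rw [hts']
  ring

lemma coeff_identity (z : ℂ) (m k : ℕ) (L : ℂ) :
    ∑ i ∈ Finset.range (k + 1),
      sElem k (k - i) z * (Nat.descFactorial m i : ℂ) *
        ((z - k) * L ^ (m - i) + ((m - i : ℕ) : ℂ) * L ^ (m - i - 1)) =
    ∑ j ∈ Finset.range (k + 2),
      sElem (k + 1) (k + 1 - j) z * (Nat.descFactorial m j : ℂ) * L ^ (m - j) := by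
  have hdf : ∀ i : ℕ, ((m - i : ℕ) : ℂ) * (Nat.descFactorial m i : ℂ)
      = (Nat.descFactorial m (i + 1) : ℂ) := by
    intro i; rw [Nat.descFactorial_succ, Nat.cast_mul]
  have hL : ∑ i ∈ Finset.range (k + 1),
      sElem k (k - i) z * (Nat.descFactorial m i : ℂ) *
        ((z - k) * L ^ (m - i) + ((m - i : ℕ) : ℂ) * L ^ (m - i - 1)) =
      (z - k) * ∑ i ∈ Finset.range (k + 1),
          sElem k (k - i) z * (Nat.descFactorial m i : ℂ) * L ^ (m - i)
      + ∑ i ∈ Finset.range (k + 1),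
          sElem k (k - i) z * (Nat.descFactorial m (i + 1) : ℂ) * L ^ (m - (i + 1)) := by
    rw [Finset.mul_sum, ← Finset.sum_add_distrib]
    refine Finset.sum_congr rfl fun i _ => ?_
    rw [← hdf i, Nat.sub_sub]
    ring
  rw [hL]
  -- peel the top term `j = k+1` from the RHS
  conv_rhs => rw [Finset.sum_range_succ]
  have hsucc : ∀ j ∈ Finset.range (k + 1),
      sElem (k + 1) (k + 1 - j) z * (Nat.descFactorial m j : ℂ) * L ^ (m - j)
      = sElem k (k + 1 - j) z * (Nat.descFactorial m j : ℂ) * L ^ (m - j)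
        + (z - k) * (sElem k (k - j) z * (Nat.descFactorial m j : ℂ) * L ^ (m - j)) := by
    intro j hj
    have hj' : j ≤ k := Nat.lt_succ_iff.mp (Finset.mem_range.mp hj)
    have hidx : k + 1 - j = (k - j) + 1 := by omega
    rw [hidx, sElem_succ]
    ring
  rw [Finset.sum_congr rfl hsucc, Finset.sum_add_distrib, ← Finset.mul_sum]
  -- peel the bottom term `j = 0` from the first RHS sum
  rw [Finset.sum_range_succ'
    (fun j => sElem k (k + 1 - j) z * (Nat.descFactorial m j : ℂ) * L ^ (m - j)) k]
  have h0 : sElem k (k + 1) z = 0 := sElem_eq_zero_of_lt (Nat.lt_succ_self k) z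
  simp only [Nat.sub_zero, h0, zero_mul]
  have hre : ∀ i ∈ Finset.range k,
      sElem k (k + 1 - (i + 1)) z * (Nat.descFactorial m (i + 1) : ℂ) * L ^ (m - (i + 1))
      = sElem k (k - i) z * (Nat.descFactorial m (i + 1) : ℂ) * L ^ (m - (i + 1)) := by
    intro i _; rw [Nat.succ_sub_succ]
  rw [Finset.sum_congr rfl hre]
  -- peel the top term `i = k` from the LHS second sum
  rw [Finset.sum_range_succ
    (fun i => sElem k (k - i) z * (Nat.descFactorial m (i + 1) : ℂ) * L ^ (m - (i + 1))) k]
  simp only [Nat.sub_self, sElem_zero]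
  ring

lemma key (z : ℂ) (m : ℕ) : ∀ k : ℕ, ∀ t ∈ Set.Ioi (0 : ℝ),
    iteratedDerivWithin k
      (fun t : ℝ => (t : ℂ) ^ z * (Real.log t : ℂ) ^ m) (Set.Ioi 0) t =
    (t : ℂ) ^ (z - k) *
      ∑ i ∈ Finset.range (k + 1),
        sElem k (k - i) z * (Nat.descFactorial m i : ℂ) * (Real.log t : ℂ) ^ (m - i) := by
  intro k
  induction k with
  | zero =>
    intro t ht
    simp [sElem_zero]
  | succ k ih =>
    intro t ht
    have huniq : UniqueDiffWithinAt ℝ (Set.Ioi (0 : ℝ)) t :=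
      uniqueDiffOn_Ioi 0 t ht
    rw [iteratedDerivWithin_succ]
    set g : ℝ → ℂ := fun t => ∑ i ∈ Finset.range (k + 1),
      sElem k (k - i) z * (Nat.descFactorial m i : ℂ) *
        ((t : ℂ) ^ (z - k) * (Real.log t : ℂ) ^ (m - i)) with hg
    have hEq : Set.EqOn
        (iteratedDerivWithin k
          (fun t : ℝ => (t : ℂ) ^ z * (Real.log t : ℂ) ^ m) (Set.Ioi 0)) g (Set.Ioi 0) := by
      intro s hs
      rw [ih s hs, hg, Finset.mul_sum]
      exact Finset.sum_congr rfl fun i _ => by ring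
    rw [derivWithin_congr hEq (hEq ht)]
    have hgd : HasDerivAt g
        (∑ i ∈ Finset.range (k + 1),
          sElem k (k - i) z * (Nat.descFactorial m i : ℂ) *
            ((t : ℂ) ^ (z - k - 1) *
              ((z - k) * (Real.log t : ℂ) ^ (m - i) +
                ((m - i : ℕ) : ℂ) * (Real.log t : ℂ) ^ (m - i - 1)))) t := by
      apply HasDerivAt.fun_sum
      intro i _
      exact (hasDerivAt_F (z - k) (m - i) ht).const_mul _
    rw [hgd.hasDerivWithinAt.derivWithin huniq]
    have hstep : ∑ i ∈ Finset.range (k + 1),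
        sElem k (k - i) z * (Nat.descFactorial m i : ℂ) *
          ((t : ℂ) ^ (z - k - 1) *
            ((z - k) * (Real.log t : ℂ) ^ (m - i) +
              ((m - i : ℕ) : ℂ) * (Real.log t : ℂ) ^ (m - i - 1)))
        = (t : ℂ) ^ (z - k - 1) *
          ∑ i ∈ Finset.range (k + 1),
            sElem k (k - i) z * (Nat.descFactorial m i : ℂ) *
              ((z - k) * (Real.log t : ℂ) ^ (m - i) +
                ((m - i : ℕ) : ℂ) * (Real.log t : ℂ) ^ (m - i - 1)) := by
      rw [Finset.mul_sum]
      exact Finset.sum_congr rfl fun i _ => by ring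
    rw [hstep, coeff_identity z m k (Real.log t : ℂ)]
    have hz : (((k + 1 : ℕ)) : ℂ) = (k : ℂ) + 1 := by push_cast; ring
    rw [hz, show z - ((k : ℂ) + 1) = z - k - 1 from by ring]

/-- The `k`-th derivative (on `t > 0`) of `f_z^{(0)}(t) = t^z (log t)^m` is
`t^{z-k} ∑_{i=0}^{min(k,m)} s_{k,k-i}(z) · m(m-1)⋯(m-i+1) · (log t)^{m-i}`. -/
theorem stmt_4 (z : ℂ) (m : ℕ) (k : ℕ) (hk : 0 < k) :
    ∀ t ∈ Set.Ioi (0 : ℝ),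
      iteratedDerivWithin k
        (fun t : ℝ => (t : ℂ) ^ z * (Real.log t : ℂ) ^ m) (Set.Ioi 0) t =
      (t : ℂ) ^ (z - k) *
        ∑ i ∈ Finset.range (min k m + 1),
          sElem k (k - i) z * (Nat.descFactorial m i : ℂ) *
            (Real.log t : ℂ) ^ (m - i) := by
  intro t ht
  rw [key z m k t ht]
  congr 1
  refine (Finset.sum_subset ?_ ?_).symm
  · intro i hi
    simp only [Finset.mem_range] at hi ⊢
    omega
  · intro i hi hni
    simp only [Finset.mem_range] at hi hni
    have hmi : m < i := by omega
    rw [Nat.descFactorial_eq_zero_iff_lt.mpr hmi]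
    simp
end

section
/- For z ∈ ℂ \ ℤ_{<0} and k > 0, the function g(t) = [z]_k t^{z+k} (log t − m_{k,1}(z)) satisfies g'(t) = [z]_{k-1} t^{z+k-1} (log t − m_{k-1,1}(z)), where [z]_k = 1/((z+1)⋯(z+k)) and m_{k,1}(z) = Σ_{j=1}^k 1/(z+j). In particular, the k-th derivative of g is t^z log t. -/
/-- `[z]_k = 1/((z+1)(z+2)⋯(z+k))`, with `[z]_0 = 1`. -/
noncomputable def bracketPos (z : ℂ) (k : ℕ) : ℂ :=
  (∏ j ∈ Finset.range k, (z + j + 1))⁻¹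

/-- `m_{k,1}(z) = ∑_{j=1}^k 1/(z+j)`, with `m_{0,1}(z) = 0`. -/
noncomputable def mSum (k : ℕ) (z : ℂ) : ℂ :=
  ∑ j ∈ Finset.range k, (z + j + 1)⁻¹

lemma aux_pow_log (w c : ℂ) {t : ℝ} (ht : 0 < t) :
    HasDerivAt (fun t : ℝ => (t : ℂ) ^ w * ((Real.log t : ℂ) - c))
      (w * (t : ℂ) ^ (w - 1) * ((Real.log t : ℂ) - c) + (t : ℂ) ^ (w - 1)) t := by
  have hpow : HasDerivAt (fun t : ℝ => (t : ℂ) ^ w) (w * (t : ℂ) ^ (w - 1)) t := by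
    have := (((hasDerivAt_id (t : ℂ)).cpow_const (c := w)
      (Or.inl (by simpa using ht))).comp_ofReal (z := t))
    simpa using this
  have hlog : HasDerivAt (fun t : ℝ => ((Real.log t : ℂ) - c)) ((t : ℂ)⁻¹) t := by
    have := ((Real.hasDerivAt_log ht.ne').ofReal_comp).sub_const c
    simpa using this
  have := hpow.mul hlog
  convert this using 1
  · rfl
  · rfl
  have h0 : (t : ℂ) ≠ 0 := by exact_mod_cast ht.ne'
  rw [Complex.cpow_sub _ _ h0, Complex.cpow_one]
  field_simp

lemma aux_step (z : ℂ) (hz : ∀ n : ℕ, z ≠ -(n + 1 : ℕ)) (k : ℕ) {t : ℝ} (ht : 0 < t) :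
    HasDerivAt
      (fun t : ℝ => bracketPos z (k + 1) * (t : ℂ) ^ (z + (k + 1 : ℕ)) *
        ((Real.log t : ℂ) - mSum (k + 1) z))
      (bracketPos z k * (t : ℂ) ^ (z + (k : ℕ)) *
        ((Real.log t : ℂ) - mSum k z)) t := by
  have hne : z + k + 1 ≠ 0 := by
    intro h
    apply hz k
    push_cast
    linear_combination h
  have hprod : ∀ m : ℕ, (∏ j ∈ Finset.range m, (z + j + 1)) ≠ 0 := by
    intro m
    refine Finset.prod_ne_zero_iff.mpr fun j _ h => hz j ?_
    push_cast
    linear_combination h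
  have key := (aux_pow_log (z + (k + 1 : ℕ)) (mSum (k + 1) z) ht).const_mul
    (bracketPos z (k + 1))
  convert key using 1
  · rfl
  · funext s; ring
  have hs : z + (k + 1 : ℕ) - 1 = z + (k : ℕ) := by push_cast; ring
  rw [hs]
  have hb : bracketPos z (k + 1) * (z + k + 1) = bracketPos z k := by
    unfold bracketPos
    rw [Finset.prod_range_succ, mul_inv, mul_assoc, inv_mul_cancel₀ hne, mul_one]
  have hm : mSum (k + 1) z = mSum k z + (z + k + 1)⁻¹ := by
    unfold mSum
    rw [Finset.sum_range_succ]
  rw [hm]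
  push_cast
  linear_combination (-((t:ℂ) ^ (z + (k:ℂ)) * ((Real.log t : ℂ) - mSum k z))) * hb
    + (bracketPos z (k + 1) * (t:ℂ) ^ (z + (k:ℂ))) * (mul_inv_cancel₀ hne)

/-- For `z ∈ ℂ \ ℤ_{<0}` and `k > 0`, the function
`g(t) = [z]_k t^{z+k} (log t − m_{k,1}(z))` satisfies
`g'(t) = [z]_{k-1} t^{z+k-1} (log t − m_{k-1,1}(z))` on `t > 0`; in particular
its `k`-th derivative is `t^z log t`. -/
theorem stmt_5 (z : ℂ) (hz : ∀ n : ℕ, z ≠ -(n + 1 : ℕ)) (k : ℕ) (hk : 0 < k) :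
    (∀ t : ℝ, 0 < t →
      HasDerivAt
        (fun t : ℝ => bracketPos z k * (t : ℂ) ^ (z + k) *
          ((Real.log t : ℂ) - mSum k z))
        (bracketPos z (k - 1) * (t : ℂ) ^ (z + (k - 1 : ℕ)) *
          ((Real.log t : ℂ) - mSum (k - 1) z)) t) ∧
    (∀ t ∈ Set.Ioi (0 : ℝ),
      iteratedDerivWithin k
        (fun t : ℝ => bracketPos z k * (t : ℂ) ^ (z + k) *
          ((Real.log t : ℂ) - mSum k z)) (Set.Ioi 0) t =
      (t : ℂ) ^ z * (Real.log t : ℂ)) := by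
  have huniq : UniqueDiffOn ℝ (Set.Ioi (0 : ℝ)) := uniqueDiffOn_Ioi 0
  have main : ∀ m : ℕ, ∀ t ∈ Set.Ioi (0 : ℝ),
      iteratedDerivWithin m
        (fun t : ℝ => bracketPos z m * (t : ℂ) ^ (z + m) *
          ((Real.log t : ℂ) - mSum m z)) (Set.Ioi 0) t =
      (t : ℂ) ^ z * (Real.log t : ℂ) := by
    intro m
    induction m with
    | zero =>
      intro t ht
      simp [bracketPos, mSum, iteratedDerivWithin_zero]
    | succ n IH =>
      intro t ht
      rw [iteratedDerivWithin_succ']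
      have heq : Set.EqOn
          (derivWithin (fun t : ℝ => bracketPos z (n + 1) * (t : ℂ) ^ (z + (n + 1 : ℕ)) *
            ((Real.log t : ℂ) - mSum (n + 1) z)) (Set.Ioi 0))
          (fun t : ℝ => bracketPos z n * (t : ℂ) ^ (z + n) *
            ((Real.log t : ℂ) - mSum n z)) (Set.Ioi 0) := by
        intro s hs
        have := (aux_step z hz n (Set.mem_Ioi.mp hs)).hasDerivWithinAt (s := Set.Ioi (0:ℝ))
        rw [this.derivWithin (huniq s hs)]
      calc iteratedDerivWithin n _ (Set.Ioi 0) t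
          = iteratedDerivWithin n (fun t : ℝ => bracketPos z n * (t : ℂ) ^ (z + n) *
              ((Real.log t : ℂ) - mSum n z)) (Set.Ioi 0) t :=
            iteratedDerivWithin_congr heq ht
        _ = (t : ℂ) ^ z * (Real.log t : ℂ) := IH t ht
  constructor
  · intro t ht
    obtain ⟨n, rfl⟩ : ∃ n, k = n + 1 := ⟨k - 1, (Nat.succ_pred_eq_of_pos hk).symm⟩
    simpa using aux_step z hz n ht
  · exact main k
end

section
/- Let L ⊆ ℤ^N be the lattice of relations on A = {a_1,…,a_N} ⊆ ℤ^n and v ∈ ℂ^N with Σ v_i a_i = β. If for i ≠ j the vector v has both minimal î-negative support and minimal ĵ-negative support, then v has minimal negative support. -/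
/-- The negative support of `v ∈ ℂ^N`: the set of indices where `v` is a
negative integer. -/
def nsupp {N : ℕ} (v : Fin N → ℂ) : Set (Fin N) :=
  {i | ∃ m : ℤ, m < 0 ∧ v i = m}

/-- If `v` has minimal `î`-negative support and minimal `ĵ`-negative support
for some `i ≠ j`, then `v` has minimal negative support. -/
theorem stmt_6 {n N : ℕ} (a : Fin N → Fin n → ℤ) (β : Fin n → ℂ)
    (L : Set (Fin N → ℤ))
    (hL : L = {l | ∀ r, ∑ s, l s * a s r = 0})
    (v : Fin N → ℂ) (hv : ∀ r, ∑ s, v s * (a s r : ℂ) = β r)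
    (i j : Fin N) (hij : i ≠ j)
    (hi : ¬ ∃ l ∈ L, nsupp (v + fun s => (l s : ℂ)) \ {i} ⊂ nsupp v \ {i})
    (hj : ¬ ∃ l ∈ L, nsupp (v + fun s => (l s : ℂ)) \ {j} ⊂ nsupp v \ {j}) :
    ¬ ∃ l ∈ L, nsupp (v + fun s => (l s : ℂ)) ⊂ nsupp v := by
  rintro ⟨l, hlL, hsub⟩
  obtain ⟨hss, hns⟩ := hsub
  obtain ⟨x, hxv, hxl⟩ := Set.not_subset.mp hns
  have key : ∀ k : Fin N, x ≠ k →
      nsupp (v + fun s => (l s : ℂ)) \ {k} ⊂ nsupp v \ {k} := by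
    intro k hxk
    constructor
    · exact fun y ⟨hy, hyk⟩ => ⟨hss hy, hyk⟩
    · intro h
      exact hxl (h ⟨hxv, hxk⟩).1
  by_cases hxi : x = i
  · by_cases hxj : x = j
    · exact hij (hxi ▸ hxj)
    · exact hj ⟨l, hlL, key j hxj⟩
  · exact hi ⟨l, hlL, key i hxi⟩
end

section
/- (Lemma 6.4) Let A_i ⊆ ℤ^n be finite sets with convex hulls Δ_i, Δ = Σ_{i=1}^M Δ_i their Minkowski sum, and δ ∈ Δ a lattice point. Embed via hat: â = (a; e_i) ∈ ℝ^{n+M} for a ∈ A_i, let Γ be the intersection of the cone generated by all â with the hyperplane y_1 + ⋯ + y_M = M, and γ = (δ; 1,…,1). Then δ is the unique interior lattice point of Δ if and only if γ is the unique interior lattice point of Γ. -/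
open Set Finset

section General

variable {E : Type*} [NormedAddCommGroup E] [NormedSpace ℝ E]

lemma aux_mem_intrinsicInterior_iff {s : Set E} {x : E} :
    x ∈ intrinsicInterior ℝ s ↔
      x ∈ affineSpan ℝ s ∧ ∃ U : Set E, IsOpen U ∧ x ∈ U ∧
        U ∩ (affineSpan ℝ s : Set E) ⊆ s := by
  constructor
  · rintro ⟨y, hy, rfl⟩
    obtain ⟨V, hVsub, hVopen, hyV⟩ := mem_interior.mp hy
    obtain ⟨U, hU, hUV⟩ := isOpen_induced_iff.mp hVopen
    refine ⟨y.2, U, hU, ?_, ?_⟩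
    · have : y ∈ V := hyV
      rw [← hUV] at this; exact this
    · rintro z ⟨hzU, hzspan⟩
      have : (⟨z, hzspan⟩ : affineSpan ℝ s) ∈ V := by rw [← hUV]; exact hzU
      exact hVsub this
  · rintro ⟨hxspan, U, hU, hxU, hsub⟩
    refine ⟨⟨x, hxspan⟩, ?_, rfl⟩
    refine mem_interior.mpr ⟨Subtype.val ⁻¹' U, ?_, isOpen_induced hU, hxU⟩
    rintro ⟨z, hz⟩ hzU
    exact hsub ⟨hzU, hz⟩

variable {ι : Type*} [Fintype ι]

lemma aux_mem_convexHull_range_iff [DecidableEq ι] {f : ι → E} {x : E} :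
    x ∈ convexHull ℝ (Set.range f) ↔
      ∃ w : ι → ℝ, (∀ i, 0 ≤ w i) ∧ ∑ i, w i = 1 ∧ ∑ i, w i • f i = x := by
  constructor
  · intro hx
    rw [convexHull_range_eq_exists_affineCombination] at hx
    obtain ⟨s, w, h0, h1, hx⟩ := hx
    refine ⟨fun i => if i ∈ s then w i else 0, fun i => ?_, ?_, ?_⟩
    · dsimp only; split
      · exact h0 _ ‹_›
      · exact le_refl _
    · simp only; rw [Finset.sum_ite_mem, Finset.univ_inter, h1]
    · rw [← hx, Finset.affineCombination_eq_linear_combination s f w h1]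
      simp only [ite_smul, zero_smul]
      rw [Finset.sum_ite_mem, Finset.univ_inter]
  · rintro ⟨w, h0, h1, hx⟩
    exact mem_convexHull_of_exists_fintype w f h0 h1 (fun i => mem_range_self i) hx

end General
section L1

open Set Finset

variable {E : Type*} [NormedAddCommGroup E] [NormedSpace ℝ E]
variable {ι : Type*} [Fintype ι]

/-- The combination linear map `w ↦ (∑ wᵢ • fᵢ, ∑ wᵢ)`. -/
noncomputable def comboMap (f : ι → E) : (ι → ℝ) →ₗ[ℝ] E × ℝ where
  toFun w := (∑ i, w i • f i, ∑ i, w i)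
  map_add' u v := by
    simp [add_smul, Finset.sum_add_distrib, Prod.ext_iff]
  map_smul' c u := by
    simp [mul_smul, Finset.smul_sum, Finset.mul_sum, Prod.ext_iff, smul_eq_mul]

theorem intrinsicInterior_convexHull_range [FiniteDimensional ℝ E] [Nonempty ι]
    (f : ι → E) :
    intrinsicInterior ℝ (convexHull ℝ (Set.range f)) =
      {x | ∃ w : ι → ℝ, (∀ i, 0 < w i) ∧ ∑ i, w i = 1 ∧ ∑ i, w i • f i = x} := by
  classical
  set P := convexHull ℝ (Set.range f) with hP
  ext x
  simp only [Set.mem_setOf_eq]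
  rw [aux_mem_intrinsicInterior_iff]
  constructor
  · rintro ⟨hxspan, U, hU, hxU, hsub⟩
    have hxP : x ∈ P := hsub ⟨hxU, hxspan⟩
    set N : ℝ := (Fintype.card ι : ℝ) with hNdef
    have hN : 0 < N := by rw [hNdef]; exact_mod_cast Fintype.card_pos
    set c : E := ∑ i, N⁻¹ • f i with hc
    have hcP : c ∈ P := by
      rw [hP, aux_mem_convexHull_range_iff]
      exact ⟨fun _ => N⁻¹, fun _ => by positivity, by
        rw [Finset.sum_const, Finset.card_univ, nsmul_eq_mul, mul_inv_cancel₀ hN.ne'], rfl⟩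
    -- find small θ > 0 with x + θ • (x - c) ∈ U
    have hg : Continuous fun t : ℝ => t • (x - c) + x := by continuity
    have hnhds : (fun t : ℝ => t • (x - c) + x) ⁻¹' U ∈ nhds (0 : ℝ) :=
      hg.continuousAt.preimage_mem_nhds (by simpa using hU.mem_nhds hxU)
    obtain ⟨ε, hε, hball⟩ := Metric.mem_nhds_iff.mp hnhds
    set θ : ℝ := ε / 2 with hθdef
    have hθ : 0 < θ := by positivity
    set x' : E := θ • (x - c) + x with hx'
    have hx'U : x' ∈ U := by
      apply hball
      simp only [Metric.mem_ball, Real.dist_eq, sub_zero, abs_of_pos hθ, hθdef]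
      rw [abs_of_pos (by linarith : (0:ℝ) < ε / 2)]; linarith
    have hx'span : x' ∈ affineSpan ℝ P := by
      have := AffineSubspace.smul_vsub_vadd_mem (affineSpan ℝ P) θ
        (subset_affineSpan ℝ P hxP) (subset_affineSpan ℝ P hcP) hxspan
      simpa [vsub_eq_sub, vadd_eq_add] using this
    have hx'P : x' ∈ P := hsub ⟨hx'U, hx'span⟩
    obtain ⟨u, hu0, hu1, hux⟩ := aux_mem_convexHull_range_iff.mp hx'P
    refine ⟨fun i => (1 + θ)⁻¹ * (u i + θ * N⁻¹), fun i => ?_, ?_, ?_⟩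
    · have := hu0 i
      have h1θ : (0:ℝ) < 1 + θ := by linarith
      have : 0 < u i + θ * N⁻¹ := by positivity
      positivity
    · simp only [mul_add, Finset.sum_add_distrib, ← Finset.mul_sum]
      rw [hu1, Finset.sum_const, Finset.card_univ, nsmul_eq_mul]
      field_simp [hNdef]
      rw [← hNdef]; ring
    · have h1θ : (1 + θ) ≠ 0 := by positivity
      have expand : ∀ i, ((1 + θ)⁻¹ * (u i + θ * N⁻¹)) • f i
          = (1 + θ)⁻¹ • (u i • f i) + (1 + θ)⁻¹ • ((θ * N⁻¹) • f i) := by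
        intro i
        rw [mul_add, add_smul, mul_smul, mul_smul]
      simp only [expand]
      rw [Finset.sum_add_distrib, ← Finset.smul_sum, ← Finset.smul_sum, hux]
      have : ∑ i, (θ * N⁻¹) • f i = θ • c := by
        rw [hc, Finset.smul_sum]
        exact Finset.sum_congr rfl fun i _ => (mul_smul _ _ _)
      rw [this, hx']
      match_scalars <;> field_simp <;> ring
  · rintro ⟨w, hw0, hw1, hwx⟩
    have hxP : x ∈ P := by
      rw [hP, aux_mem_convexHull_range_iff]
      exact ⟨w, fun i => (hw0 i).le, hw1, hwx⟩
    refine ⟨subset_affineSpan ℝ P hxP, ?_⟩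
    set L := comboMap f with hL
    set F := LinearMap.range L with hF
    haveI : CompleteSpace F := FiniteDimensional.complete ℝ F
    set L' : (ι → ℝ) →L[ℝ] F := LinearMap.toContinuousLinearMap (L.rangeRestrict) with hL'
    have hsurj : Function.Surjective L' := by
      simpa [hL', LinearMap.coe_toContinuousLinearMap] using L.surjective_rangeRestrict
    have hopen : IsOpenMap L' := L'.isOpenMap hsurj
    set O₀ : Set (ι → ℝ) := {v | ∀ i, 0 < v i} with hO₀def
    have hO₀ : IsOpen O₀ := by
      have : O₀ = ⋂ i, (fun v : ι → ℝ => v i) ⁻¹' Set.Ioi 0 := by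
        ext v; simp [hO₀def]
      rw [this]
      exact isOpen_iInter_of_finite fun i => isOpen_Ioi.preimage (continuous_apply i)
    obtain ⟨O', hO', hO'eq⟩ := isOpen_induced_iff.mp (hopen _ hO₀)
    set U : Set E := (fun y : E => ((y, 1) : E × ℝ)) ⁻¹' O' with hUdef
    have hjc : Continuous fun y : E => ((y, 1) : E × ℝ) := by continuity
    have hmemO : ∀ z : E, (z, (1:ℝ)) ∈ F → (z, (1:ℝ)) ∈ O' →
        ∃ v : ι → ℝ, (∀ i, 0 < v i) ∧ ∑ i, v i = 1 ∧ ∑ i, v i • f i = z := by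
      intro z hzF hzO'
      have : (⟨(z, 1), hzF⟩ : F) ∈ L' '' O₀ := by
        rw [← hO'eq]; exact hzO'
      obtain ⟨v, hv, hveq⟩ := this
      have hveq' : L v = (z, 1) := congrArg Subtype.val hveq
      have h1 : ∑ i, v i • f i = z := congrArg Prod.fst hveq'
      have h2 : ∑ i, v i = 1 := congrArg Prod.snd hveq'
      exact ⟨v, hv, h2, h1⟩
    refine ⟨U, hO'.preimage hjc, ?_, ?_⟩
    · have : L' w ∈ L' '' O₀ := Set.mem_image_of_mem _ hw0
      rw [← hO'eq] at this
      have : ((L w : E × ℝ)) ∈ O' := this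
      have hLw : L w = (x, 1) := by
        rw [hL]; simp only [comboMap, LinearMap.coe_mk, AddHom.coe_mk]
        rw [hwx, hw1]
      rw [hLw] at this
      exact this
    · rintro z ⟨hzU, hzspan⟩
      -- z in the affine span, so (z,1) ∈ F
      have hspan : affineSpan ℝ P = affineSpan ℝ (Set.range f) := affineSpan_convexHull _
      have hzF : ((z, 1) : E × ℝ) ∈ F := by
        have hij : ∀ i, ((f i, 1) : E × ℝ) ∈ F := by
          intro i
          refine ⟨Pi.single i 1, ?_⟩
          rw [hL]; simp only [comboMap, LinearMap.coe_mk, AddHom.coe_mk]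
          rw [Prod.ext_iff]
          constructor
          · simp only
            rw [Finset.sum_eq_single i]
            · simp
            · intro b _ hb; simp [Pi.single_apply, hb]
            · simp
          · simp
        -- use affine subspace comap
        set j : E →ᵃ[ℝ] E × ℝ := AffineMap.mk' (fun y : E => ((y, 1) : E × ℝ))
          ((LinearMap.id : E →ₗ[ℝ] E).prod 0) 0 (by
            intro p; simp [Prod.ext_iff, vsub_eq_sub, vadd_eq_add]) with hj
        have hle : affineSpan ℝ (Set.range f) ≤
            AffineSubspace.comap j F.toAffineSubspace := by
          apply affineSpan_le.mpr
          rintro _ ⟨i, rfl⟩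
          show f i ∈ AffineSubspace.comap j F.toAffineSubspace
          rw [AffineSubspace.mem_comap]
          have hji : j (f i) = (f i, 1) := by rw [hj]; simp [AffineMap.coe_mk']
          rw [hji, Submodule.mem_toAffineSubspace]
          exact hij i
        have hz' : z ∈ AffineSubspace.comap j F.toAffineSubspace :=
          hle (by rw [← hspan]; exact hzspan)
        rw [AffineSubspace.mem_comap] at hz'
        have hjz : j z = (z, 1) := by rw [hj]; simp [AffineMap.coe_mk']
        rw [hjz, Submodule.mem_toAffineSubspace] at hz'
        exact hz'
      have hzO' : ((z, 1) : E × ℝ) ∈ O' := hzU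
      obtain ⟨v, hv0, hv1, hvz⟩ := hmemO z hzF hzO'
      rw [hP, aux_mem_convexHull_range_iff]
      exact ⟨v, fun i => (hv0 i).le, hv1, hvz⟩

end L1
section Fubini

open Finset

variable {ι : Type*} [Fintype ι] {κ : ι → Type*} [∀ i, Fintype (κ i)]

lemma aux_sum_prod_fiber [DecidableEq ι] (ν : ∀ i, κ i → ℝ) (hν : ∀ i, ∑ a, ν i a = 1)
    (i₀ : ι) [DecidableEq (κ i₀)] (a₀ : κ i₀) :
    ∑ t : ∀ i, κ i, (if t i₀ = a₀ then ∏ i, ν i (t i) else 0) = ν i₀ a₀ := by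
  classical
  set ν' : ∀ i, κ i → ℝ :=
    Function.update ν i₀ (fun a => if a = a₀ then ν i₀ a₀ else 0) with hν'
  have hrow : ∀ i, ∑ a, ν' i a = if i = i₀ then ν i₀ a₀ else 1 := by
    intro i
    by_cases h : i = i₀
    · subst h
      rw [hν', Function.update_self, if_pos rfl]
      simp
    · rw [hν', Function.update_of_ne h, hν i, if_neg h]
  have hterm : ∀ t : ∀ i, κ i,
      ∏ i, ν' i (t i) = (if t i₀ = a₀ then ∏ i, ν i (t i) else 0) := by
    intro t
    by_cases h : t i₀ = a₀
    · rw [if_pos h]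
      refine Finset.prod_congr rfl fun i _ => ?_
      by_cases hi : i = i₀
      · subst hi
        rw [hν', Function.update_self, if_pos h, h]
      · rw [hν', Function.update_of_ne hi]
    · rw [if_neg h]
      refine Finset.prod_eq_zero (Finset.mem_univ i₀) ?_
      rw [hν', Function.update_self, if_neg h]
  calc ∑ t : ∀ i, κ i, (if t i₀ = a₀ then ∏ i, ν i (t i) else 0)
      = ∑ t : ∀ i, κ i, ∏ i, ν' i (t i) := by
        exact (Finset.sum_congr rfl fun t _ => (hterm t)).symm
    _ = ∏ i, ∑ a, ν' i a := (Fintype.prod_sum _).symm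
    _ = ν i₀ a₀ := by
        rw [Finset.prod_eq_single i₀ (fun i _ hi => by rw [hrow i, if_neg hi])
          (fun h => absurd (Finset.mem_univ i₀) h), hrow i₀, if_pos rfl]

variable {V : Type*} [AddCommMonoid V] [Module ℝ V]

lemma aux_sum_prod_smul [DecidableEq ι] (ν : ∀ i, κ i → ℝ) (hν : ∀ i, ∑ a, ν i a = 1)
    (i₀ : ι) (z : κ i₀ → V) :
    ∑ t : ∀ i, κ i, (∏ i, ν i (t i)) • z (t i₀) = ∑ a, ν i₀ a • z a := by
  classical
  have step : ∀ t : ∀ i, κ i, (∏ i, ν i (t i)) • z (t i₀)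
      = ∑ a₀ : κ i₀, (if t i₀ = a₀ then ∏ i, ν i (t i) else 0) • z a₀ := by
    intro t
    rw [Finset.sum_congr rfl (fun a₀ _ => ite_smul _ _ _ _)]
    simp only [zero_smul]
    rw [Finset.sum_ite_eq Finset.univ (t i₀) (fun a₀ => (∏ i, ν i (t i)) • z a₀)]
    simp
  simp only [step]
  rw [Finset.sum_comm]
  refine Finset.sum_congr rfl fun a₀ _ => ?_
  rw [← Finset.sum_smul, aux_sum_prod_fiber ν hν i₀ a₀]

end Fubini
lemma aux_sum_sigma {α : Type*} {σ : α → Type*} [Fintype α] [∀ a, Fintype (σ a)]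
    {β : Type*} [AddCommMonoid β] (g : (Σ a, σ a) → β) :
    ∑ p, g p = ∑ a, ∑ s, g ⟨a, s⟩ := by
  rw [← Finset.univ_sigma_univ, Finset.sum_sigma]

/-- Coercion of an integer vector to a real vector. -/
def zR {n : ℕ} (a : Fin n → ℤ) : Fin n → ℝ := fun r => (a r : ℝ)

/-- `â = (a; e_i) ∈ ℝ^{n+M}` for `a ∈ A_i`. -/
def hatVec {n M : ℕ} (i : Fin M) (a : Fin n → ℤ) : (Fin n → ℝ) × (Fin M → ℝ) :=
  (zR a, fun k => if k = i then 1 else 0)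

set_option maxHeartbeats 1000000 in
/-- Lemma 6.4: `δ` is the unique interior lattice point of the Minkowski sum
`Δ = ∑ Δ_i` if and only if `γ = (δ;1,…,1)` is the unique interior lattice
point of `Γ = C(Δ̂) ∩ {∑ y_i = M}`, where `Γ` is the convex hull of
`⋃_i M·Δ̂_i`. -/
theorem stmt_10 {n M : ℕ} (hM : 0 < M)
    (A : Fin M → Finset (Fin n → ℤ)) (hA : ∀ i, (A i).Nonempty)
    (δ : Fin n → ℤ)
    (Δ : Set (Fin n → ℝ))
    (hΔ : Δ = {x | ∃ f : Fin M → (Fin n → ℝ),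
      (∀ i, f i ∈ convexHull ℝ (zR '' (A i : Set (Fin n → ℤ)))) ∧ x = ∑ i, f i})
    (hδ : zR δ ∈ Δ)
    (Γ : Set ((Fin n → ℝ) × (Fin M → ℝ)))
    (hΓ : Γ = convexHull ℝ
      (⋃ i, (fun a => (M : ℝ) • hatVec i a) '' (A i : Set (Fin n → ℤ)))) :
    (zR δ ∈ intrinsicInterior ℝ Δ ∧
        ∀ p : Fin n → ℤ, zR p ∈ intrinsicInterior ℝ Δ → p = δ) ↔
    ((zR δ, fun _ : Fin M => (1 : ℝ)) ∈ intrinsicInterior ℝ Γ ∧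
        ∀ q : (Fin n → ℤ) × (Fin M → ℤ),
          (zR q.1, zR q.2) ∈ intrinsicInterior ℝ Γ →
            (zR q.1, zR q.2) = (zR δ, fun _ : Fin M => (1 : ℝ))) := by
  haveI hne : ∀ i, Nonempty {a // a ∈ A i} := fun i =>
    ⟨⟨(hA i).choose, (hA i).choose_spec⟩⟩
  haveI : Nonempty (Σ i : Fin M, {a // a ∈ A i}) :=
    ⟨⟨⟨0, hM⟩, Classical.arbitrary _⟩⟩
  haveI : Nonempty (∀ i : Fin M, {a // a ∈ A i}) := ⟨fun i => Classical.arbitrary _⟩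
  set fΓ : (Σ i : Fin M, {a // a ∈ A i}) → (Fin n → ℝ) × (Fin M → ℝ) :=
    fun p => (M : ℝ) • hatVec p.1 ↑p.2 with hfΓ
  set fΔ : (∀ i : Fin M, {a // a ∈ A i}) → (Fin n → ℝ) :=
    fun t => ∑ i, zR (t i).val with hfΔ
  have hMR : (0:ℝ) < M := by exact_mod_cast hM
  -- Γ as convex hull of a range
  have hΓ2 : Γ = convexHull ℝ (Set.range fΓ) := by
    rw [hΓ]
    congr 1
    ext v
    simp only [Set.mem_iUnion, Set.mem_image, Set.mem_range, Finset.mem_coe]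
    constructor
    · rintro ⟨i, a, ha, rfl⟩
      exact ⟨⟨i, ⟨a, ha⟩⟩, rfl⟩
    · rintro ⟨⟨i, a⟩, rfl⟩
      exact ⟨i, ↑a, a.2, rfl⟩
  -- Δ as convex hull of a range
  have himg : ∀ i : Fin M, zR '' ((A i : Set (Fin n → ℤ))) =
      Set.range (fun a : {a // a ∈ A i} => zR a.val) := by
    intro i; ext v
    simp only [Set.mem_image, Set.mem_range, Finset.mem_coe, Subtype.exists]
    tauto
  have hΔ2 : Δ = convexHull ℝ (Set.range fΔ) := by
    apply Set.Subset.antisymm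
    · rintro x hx
      rw [hΔ] at hx
      obtain ⟨f, hf, rfl⟩ := hx
      have hν : ∀ i, ∃ ν : {a // a ∈ A i} → ℝ, (∀ a, 0 ≤ ν a) ∧ ∑ a, ν a = 1 ∧
          ∑ a, ν a • zR a.val = f i := by
        intro i
        have := hf i
        rw [himg i, aux_mem_convexHull_range_iff] at this
        exact this
      choose ν hν0 hν1 hνf using hν
      set w : (∀ i : Fin M, {a // a ∈ A i}) → ℝ := fun t => ∏ i, ν i (t i) with hw
      apply mem_convexHull_of_exists_fintype w fΔ
      · intro t; exact Finset.prod_nonneg fun i _ => hν0 i (t i)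
      · rw [hw]
        simp only
        rw [← Fintype.prod_sum]
        exact Finset.prod_eq_one fun i _ => hν1 i
      · intro t; exact Set.mem_range_self t
      · calc ∑ t, w t • fΔ t = ∑ t, ∑ i, w t • zR (t i).val := by
              refine Finset.sum_congr rfl fun t _ => ?_
              rw [hfΔ]
              exact Finset.smul_sum
          _ = ∑ i, ∑ t, w t • zR (t i).val := Finset.sum_comm
          _ = ∑ i, ∑ a : {a // a ∈ A i}, ν i a • zR a.val := by
              refine Finset.sum_congr rfl fun i _ => ?_
              simp only [hw]
              exact aux_sum_prod_smul (κ := fun i => {a // a ∈ A i}) ν hν1 i (fun a => zR (a : {a // a ∈ A i}).val)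
          _ = ∑ i, f i := Finset.sum_congr rfl fun i _ => hνf i
    · rw [hΔ]
      apply convexHull_min
      · rintro _ ⟨t, rfl⟩
        exact ⟨fun i => zR (t i).val,
          fun i => subset_convexHull ℝ _ ⟨↑(t i), (t i).2, rfl⟩, rfl⟩
      · rintro x ⟨f, hf, rfl⟩ y ⟨g, hg, rfl⟩ a b ha hb hab
        refine ⟨fun i => a • f i + b • g i,
          fun i => (convex_convexHull ℝ _) (hf i) (hg i) ha hb hab, ?_⟩
        rw [Finset.sum_add_distrib, Finset.smul_sum, Finset.smul_sum]
  -- raw characterizations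
  have charΓ : ∀ v : (Fin n → ℝ) × (Fin M → ℝ), v ∈ intrinsicInterior ℝ Γ ↔
      ∃ μ : (Σ i : Fin M, {a // a ∈ A i}) → ℝ,
        (∀ p, 0 < μ p) ∧ ∑ p, μ p = 1 ∧ ∑ p, μ p • fΓ p = v := by
    intro v
    rw [hΓ2, intrinsicInterior_convexHull_range fΓ]
    exact Iff.rfl
  have charΔraw : ∀ x : Fin n → ℝ, x ∈ intrinsicInterior ℝ Δ ↔
      ∃ w : (∀ i : Fin M, {a // a ∈ A i}) → ℝ,
        (∀ t, 0 < w t) ∧ ∑ t, w t = 1 ∧ ∑ t, w t • fΔ t = x := by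
    intro x
    rw [hΔ2, intrinsicInterior_convexHull_range fΔ]
    exact Iff.rfl
  -- component computation for Γ sums
  have sumΓ : ∀ μ : (Σ i : Fin M, {a // a ∈ A i}) → ℝ,
      ∑ p, μ p • fΓ p =
        ((∑ p : (Σ i : Fin M, {a // a ∈ A i}), (μ p * M) • zR p.2.val),
          fun k => M * ∑ a : {a // a ∈ A k}, μ ⟨k, a⟩) := by
    intro μ
    rw [Prod.ext_iff]
    constructor
    · rw [Prod.fst_sum]
      refine Finset.sum_congr rfl fun p _ => ?_
      show (μ p • fΓ p).1 = (μ p * M) • zR p.2.val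
      rw [hfΓ]
      simp only [hatVec, Prod.smul_mk, Prod.smul_fst, smul_smul]
    · funext k
      rw [Prod.snd_sum, Finset.sum_apply]
      have hterm : ∀ p : (Σ i : Fin M, {a // a ∈ A i}),
          (μ p • fΓ p).2 k = μ p * (M * (if k = p.1 then 1 else 0)) := by
        intro p
        rw [hfΓ]
        simp [hatVec, mul_assoc]
      rw [Finset.sum_congr rfl fun p _ => hterm p]
      rw [aux_sum_sigma (fun p : (Σ i : Fin M, {a // a ∈ A i}) =>
        μ p * (M * if k = p.1 then 1 else 0))]
      have inner : ∀ i, (∑ a : {a // a ∈ A i}, μ ⟨i, a⟩ * (M * if k = i then 1 else 0))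
          = if k = i then M * ∑ a : {a // a ∈ A i}, μ ⟨i, a⟩ else 0 := by
        intro i
        by_cases h : k = i
        · rw [if_pos h, if_pos h, Finset.mul_sum]
          exact Finset.sum_congr rfl fun a _ => by ring
        · rw [if_neg h, if_neg h]
          simp
      rw [Finset.sum_congr rfl fun i _ => inner i, Finset.sum_ite_eq]
      simp
  -- nice characterization of relint Δ
  have charΔ : ∀ x : Fin n → ℝ, x ∈ intrinsicInterior ℝ Δ ↔
      ∃ ν : ∀ i : Fin M, {a // a ∈ A i} → ℝ,
        (∀ i a, 0 < ν i a) ∧ (∀ i, ∑ a, ν i a = 1) ∧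
          (∑ i, ∑ a : {a // a ∈ A i}, ν i a • zR a.val) = x := by
    intro x
    rw [charΔraw x]
    constructor
    · rintro ⟨w, hw0, hw1, hwx⟩
      refine ⟨fun i a => ∑ t : (∀ j : Fin M, {a // a ∈ A j}), if t i = a then w t else 0,
        ?_, ?_, ?_⟩
      · intro i a
        apply Finset.sum_pos'
        · intro t _
          split
          · exact (hw0 t).le
          · exact le_refl 0
        · refine ⟨Function.update (Classical.arbitrary _) i a, Finset.mem_univ _, ?_⟩
          have hupd : Function.update (Classical.arbitrary (∀ j : Fin M, {a // a ∈ A j})) i a i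
              = a := Function.update_self _ _ _
          rw [if_pos hupd]
          exact hw0 _
      · intro i
        rw [Finset.sum_comm]
        calc ∑ t : (∀ j : Fin M, {a // a ∈ A j}), ∑ a : {a // a ∈ A i},
                (if t i = a then w t else 0)
            = ∑ t : (∀ j : Fin M, {a // a ∈ A j}), w t := by
              refine Finset.sum_congr rfl fun t _ => ?_
              rw [Finset.sum_ite_eq, if_pos (Finset.mem_univ _)]
          _ = 1 := hw1
      · calc ∑ i, ∑ a : {a // a ∈ A i},
              (∑ t : (∀ j : Fin M, {a // a ∈ A j}), if t i = a then w t else 0) • zR a.val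
            = ∑ i, ∑ a : {a // a ∈ A i}, ∑ t : (∀ j : Fin M, {a // a ∈ A j}),
                (if t i = a then w t • zR a.val else 0) := by
              refine Finset.sum_congr rfl fun i _ => Finset.sum_congr rfl fun a _ => ?_
              rw [Finset.sum_smul]
              refine Finset.sum_congr rfl fun t _ => ?_
              rw [ite_smul, zero_smul]
          _ = ∑ i, ∑ t : (∀ j : Fin M, {a // a ∈ A j}), ∑ a : {a // a ∈ A i},
                (if t i = a then w t • zR a.val else 0) := by
              exact Finset.sum_congr rfl fun i _ => Finset.sum_comm
          _ = ∑ i, ∑ t : (∀ j : Fin M, {a // a ∈ A j}), w t • zR (t i).val := by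
              refine Finset.sum_congr rfl fun i _ => Finset.sum_congr rfl fun t _ => ?_
              rw [Finset.sum_ite_eq, if_pos (Finset.mem_univ _)]
          _ = ∑ t : (∀ j : Fin M, {a // a ∈ A j}), ∑ i, w t • zR (t i).val := Finset.sum_comm
          _ = ∑ t, w t • fΔ t := by
              refine Finset.sum_congr rfl fun t _ => ?_
              rw [hfΔ]
              exact (Finset.smul_sum).symm
          _ = x := hwx
    · rintro ⟨ν, hν0, hν1, hνx⟩
      refine ⟨fun t => ∏ i, ν i (t i),
        fun t => Finset.prod_pos (fun i _ => hν0 i (t i)), ?_, ?_⟩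
      · rw [← Fintype.prod_sum]
        exact Finset.prod_eq_one fun i _ => hν1 i
      · calc ∑ t : (∀ j : Fin M, {a // a ∈ A j}), (∏ i, ν i (t i)) • fΔ t
            = ∑ t : (∀ j : Fin M, {a // a ∈ A j}), ∑ i, (∏ j, ν j (t j)) • zR (t i).val := by
              refine Finset.sum_congr rfl fun t _ => ?_
              rw [hfΔ]
              exact Finset.smul_sum
          _ = ∑ i, ∑ t : (∀ j : Fin M, {a // a ∈ A j}), (∏ j, ν j (t j)) • zR (t i).val :=
              Finset.sum_comm
          _ = ∑ i, ∑ a : {a // a ∈ A i}, ν i a • zR a.val := by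
              refine Finset.sum_congr rfl fun i _ => ?_
              exact aux_sum_prod_smul (κ := fun i => {a // a ∈ A i}) ν hν1 i
                (fun a => zR (a : {a // a ∈ A i}).val)
          _ = x := hνx
  -- the bridge
  have E1 : ∀ x : Fin n → ℝ, x ∈ intrinsicInterior ℝ Δ ↔
      (x, fun _ : Fin M => (1:ℝ)) ∈ intrinsicInterior ℝ Γ := by
    intro x
    rw [charΔ x, charΓ _]
    constructor
    · rintro ⟨ν, hν0, hν1, hνx⟩
      refine ⟨fun p => ν p.1 p.2 / M, fun p => div_pos (hν0 p.1 p.2) hMR, ?_, ?_⟩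
      · rw [aux_sum_sigma (fun p : (Σ i : Fin M, {a // a ∈ A i}) => ν p.1 p.2 / M)]
        have hrow : ∀ i, ∑ a : {a // a ∈ A i}, ν i a / M = 1 / M := by
          intro i; rw [← Finset.sum_div, hν1 i]
        rw [Finset.sum_congr rfl fun i _ => hrow i, Finset.sum_const, Finset.card_univ,
          Fintype.card_fin]
        rw [nsmul_eq_mul, mul_one_div_cancel hMR.ne']
      · rw [sumΓ, Prod.ext_iff]
        constructor
        · simp only
          calc ∑ p : (Σ i : Fin M, {a // a ∈ A i}), (ν p.1 p.2 / M * M) • zR p.2.val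
              = ∑ p : (Σ i : Fin M, {a // a ∈ A i}), ν p.1 p.2 • zR p.2.val := by
                refine Finset.sum_congr rfl fun p _ => ?_
                rw [div_mul_cancel₀ _ hMR.ne']
            _ = ∑ i, ∑ a : {a // a ∈ A i}, ν i a • zR a.val :=
                aux_sum_sigma (fun p : (Σ i : Fin M, {a // a ∈ A i}) => ν p.1 p.2 • zR p.2.val)
            _ = x := hνx
        · funext k
          simp only
          rw [← Finset.sum_div, hν1 k]
          field_simp
    · rintro ⟨μ, hμ0, hμ1, hμx⟩
      rw [sumΓ, Prod.ext_iff] at hμx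
      have hfst := hμx.1
      have hsnd := congrFun hμx.2
      refine ⟨fun i a => M * μ ⟨i, a⟩, fun i a => mul_pos hMR (hμ0 _), fun i => ?_, ?_⟩
      · rw [← Finset.mul_sum]
        exact hsnd i
      · calc ∑ i, ∑ a : {a // a ∈ A i}, (M * μ ⟨i, a⟩) • zR a.val
            = ∑ i, ∑ a : {a // a ∈ A i}, (μ ⟨i, a⟩ * M) • zR a.val := by
              refine Finset.sum_congr rfl fun i _ => Finset.sum_congr rfl fun a _ => ?_
              rw [mul_comm]
          _ = ∑ p : (Σ i : Fin M, {a // a ∈ A i}), (μ p * M) • zR p.2.val :=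
              (aux_sum_sigma (fun p : (Σ i : Fin M, {a // a ∈ A i}) =>
                (μ p * M) • zR p.2.val)).symm
          _ = x := hfst
  -- lattice points in relint Γ have second coordinate 1
  have E2 : ∀ q : (Fin n → ℤ) × (Fin M → ℤ),
      (zR q.1, zR q.2) ∈ intrinsicInterior ℝ Γ → zR q.2 = fun _ : Fin M => (1:ℝ) := by
    intro q hq
    obtain ⟨μ, hμ0, hμ1, hμx⟩ := (charΓ _).mp hq
    rw [sumΓ, Prod.ext_iff] at hμx
    have hsnd : ∀ k, (M:ℝ) * ∑ a : {a // a ∈ A k}, μ ⟨k, a⟩ = zR q.2 k := by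
      intro k
      simpa using congrFun hμx.2 k
    have hpos : ∀ k, 0 < q.2 k := by
      intro k
      have h1 : (0:ℝ) < M * ∑ a : {a // a ∈ A k}, μ ⟨k, a⟩ :=
        mul_pos hMR (Finset.sum_pos (fun a _ => hμ0 _) Finset.univ_nonempty)
      rw [hsnd k] at h1
      simp only [zR] at h1
      exact_mod_cast h1
    have hsum : ∑ k, q.2 k = (M:ℤ) := by
      have hR : ∑ k, (q.2 k : ℝ) = M := by
        calc ∑ k, (q.2 k : ℝ)
            = ∑ k, M * ∑ a : {a // a ∈ A k}, μ ⟨k, a⟩ := by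
              refine Finset.sum_congr rfl fun k _ => ?_
              exact (hsnd k).symm
          _ = M * ∑ k, ∑ a : {a // a ∈ A k}, μ ⟨k, a⟩ := (Finset.mul_sum _ _ _).symm
          _ = M * ∑ p : (Σ i : Fin M, {a // a ∈ A i}), μ p := by rw [← aux_sum_sigma μ]
          _ = M := by rw [hμ1, mul_one]
      exact_mod_cast hR
    have hone : ∀ k, q.2 k = 1 := by
      have h1 : ∀ k ∈ (Finset.univ : Finset (Fin M)), 0 ≤ q.2 k - 1 := by
        intro k _
        have := hpos k
        omega
      have h2 : ∑ k, (q.2 k - 1) = 0 := by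
        rw [Finset.sum_sub_distrib, hsum]
        simp
      intro k
      have := (Finset.sum_eq_zero_iff_of_nonneg h1).mp h2 k (Finset.mem_univ k)
      omega
    funext k
    simp [zR, hone k]
  have zRinj : Function.Injective (zR (n := n)) := by
    intro p q h
    funext r
    have := congrFun h r
    simp only [zR] at this
    exact_mod_cast this
  constructor
  · rintro ⟨hδi, huniq⟩
    refine ⟨(E1 _).mp hδi, ?_⟩
    rintro q hq
    have hy := E2 q hq
    rw [hy] at hq
    have hq1 : zR q.1 ∈ intrinsicInterior ℝ Δ := (E1 _).mpr hq
    have := huniq q.1 hq1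
    rw [Prod.ext_iff]
    exact ⟨by rw [this], hy⟩
  · rintro ⟨hγ, huniq⟩
    refine ⟨(E1 _).mpr hγ, ?_⟩
    intro p hp
    have hp' : (zR p, fun _ : Fin M => (1:ℝ)) ∈ intrinsicInterior ℝ Γ := (E1 _).mp hp
    have h1 : zR (fun _ : Fin M => (1:ℤ)) = fun _ : Fin M => (1:ℝ) := by
      funext k; simp [zR]
    have := huniq (p, fun _ => (1:ℤ)) (by
      show (zR p, zR fun _ : Fin M => (1:ℤ)) ∈ intrinsicInterior ℝ Γ
      rw [h1]; exact hp')
    have := (Prod.ext_iff.mp this).1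
    exact zRinj this
end

section
/- In the complete intersection setup, for each pair (i,j) with j ≥ 1, the set L_{v,((i),j)-hat} := {l ∈ L : l_0^{(k)} ≤ 0 for all k, and l_m^{(k)} ≥ 0 for all (k,m) ≠ (i,j) with m ≥ 1} lies in a pointed cone: any nonnegative-integer combination of its elements summing to zero is trivial. -/
/-- The lattice of relations on the vectors `â_j^{(i)} = (a_j^{(i)}; e_i)`. -/
def latticeCI {n M : ℕ} {N : Fin M → ℕ}
    (a : (i : Fin M) → Fin (N i + 1) → Fin n → ℤ)
    (l : ((i : Fin M) × Fin (N i + 1)) → ℤ) : Prop :=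
  (∀ r : Fin n, ∑ p : (i : Fin M) × Fin (N i + 1), l p * a p.1 p.2 r = 0) ∧
  (∀ k : Fin M, ∑ j : Fin (N k + 1), l ⟨k, j⟩ = 0)

/-- For a pair `(i,j)` with `j ≥ 1`, the set
`L_{v,((i),j)-hat} = {l ∈ L : l_0^{(k)} ≤ 0, and l_m^{(k)} ≥ 0 for all (k,m) ≠ (i,j), m ≥ 1}`
lies in a pointed cone: any nonnegative-integer combination of its elements
summing to zero is trivial. -/
theorem stmt_14 {n M H : ℕ} {N : Fin M → ℕ}
    (a : (i : Fin M) → Fin (N i + 1) → Fin n → ℤ)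
    (i : Fin M) (j : Fin (N i + 1)) (hj : j ≠ 0)
    (ξ : Fin H → (((i : Fin M) × Fin (N i + 1)) → ℤ))
    (hξL : ∀ h, latticeCI a (ξ h))
    (hξv : ∀ h, (∀ k : Fin M, ξ h ⟨k, 0⟩ ≤ 0) ∧
      (∀ k : Fin M, ∀ m : Fin (N k + 1), m ≠ 0 →
        (⟨k, m⟩ : (i : Fin M) × Fin (N i + 1)) ≠ ⟨i, j⟩ → 0 ≤ ξ h ⟨k, m⟩))
    (b : Fin H → ℤ) (hb : ∀ h, 0 ≤ b h)
    (hsum : ∑ h, b h • ξ h = 0) :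
    ∀ h, 0 < b h → ξ h = 0 := by
  -- coordinatewise version of hsum
  have key : ∀ p : (i : Fin M) × Fin (N i + 1), ∑ h, b h * ξ h p = 0 := by
    intro p
    have := congrFun hsum p
    simpa [Finset.sum_apply] using this
  -- Step A : for h with 0 < b h, the 0-coordinates vanish
  have stepA : ∀ h, 0 < b h → ∀ k : Fin M, ξ h ⟨k, 0⟩ = 0 := by
    intro h hbh k
    have hterm : ∀ h' ∈ Finset.univ, b h' * ξ h' (⟨k, 0⟩ : (i : Fin M) × Fin (N i + 1)) ≤ 0 :=
      fun h' _ => mul_nonpos_of_nonneg_of_nonpos (hb h') ((hξv h').1 k)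
    have hz := (Finset.sum_eq_zero_iff_of_nonpos hterm).mp (key ⟨k, 0⟩) h (Finset.mem_univ h)
    rcases mul_eq_zero.mp hz with hb0 | hx
    · exact absurd hb0 (ne_of_gt hbh)
    · exact hx
  -- Step B : for h with 0 < b h, ξ h ⟨i,j⟩ ≤ 0
  have stepB : ∀ h, 0 < b h → ξ h ⟨i, j⟩ ≤ 0 := by
    intro h hbh
    have hsum0 := (hξL h).2 i
    have hsplit := Finset.add_sum_erase Finset.univ (fun m => ξ h ⟨i, m⟩) (Finset.mem_univ j)
    have hrest : 0 ≤ ∑ m ∈ Finset.univ.erase j, ξ h ⟨i, m⟩ := by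
      apply Finset.sum_nonneg
      intro m hm
      have hmj : m ≠ j := Finset.ne_of_mem_erase hm
      by_cases hm0 : m = 0
      · subst hm0; exact le_of_eq (stepA h hbh i).symm
      · exact (hξv h).2 i m hm0 (by simp [Sigma.mk.inj_iff, hmj])
    rw [hsum0] at hsplit
    linarith
  -- Step C : for h with 0 < b h, ξ h ⟨i,j⟩ = 0
  have stepC : ∀ h, 0 < b h → ξ h ⟨i, j⟩ = 0 := by
    intro h hbh
    have hterm : ∀ h' ∈ Finset.univ, b h' * ξ h' (⟨i, j⟩ : (i : Fin M) × Fin (N i + 1)) ≤ 0 := by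
      intro h' _
      rcases lt_or_eq_of_le (hb h') with hpos | hzero
      · exact mul_nonpos_of_nonneg_of_nonpos (hb h') (stepB h' hpos)
      · simp [← hzero]
    have hz := (Finset.sum_eq_zero_iff_of_nonpos hterm).mp (key ⟨i, j⟩) h (Finset.mem_univ h)
    rcases mul_eq_zero.mp hz with hb0 | hx
    · exact absurd hb0 (ne_of_gt hbh)
    · exact hx
  -- now all coordinates are nonneg and sum to zero per group
  intro h hbh
  have hnonneg : ∀ k : Fin M, ∀ m : Fin (N k + 1), 0 ≤ ξ h ⟨k, m⟩ := by
    intro k m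
    by_cases hm0 : m = 0
    · subst hm0; exact le_of_eq (stepA h hbh k).symm
    · by_cases hij : (⟨k, m⟩ : (i : Fin M) × Fin (N i + 1)) = ⟨i, j⟩
      · rw [hij]; exact le_of_eq (stepC h hbh).symm
      · exact (hξv h).2 k m hm0 hij
  funext p
  obtain ⟨k, m⟩ := p
  have hsum0 := (hξL h).2 k
  have := (Finset.sum_eq_zero_iff_of_nonneg
    (fun m _ => hnonneg k m)).mp hsum0 m (Finset.mem_univ m)
  exact this
end
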